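/- Let 𝕊 be a quantum system with structured states over a finite set N of locations, ↝ a policy, (read, alter) an access control matrix satisfying ↝, and ε ≥ 0. Suppose that for all agents b ∈ A, commands c ∈ C, reachable density operators ρ, and all K ⊆ N, (RM3) if Dis(ρ, 𝓔_{b,c}(ρ) | ε, K) then there exists L ∈ alter(b) with K ∩ L ≠ ∅. Then for all a, b ∈ A with ¬(b ↝ a), all c ∈ C and all reachable ρ: δ_a(ρ, 𝓔_{b,c}(ρ)) ≤ ε. -/

import Mathlib

open scoped Classical ComplexOrder
open Matrix Kronecker

noncomputable section

/-- A density operator: positive semidefinite with trace 1. -/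
def IsDensity {d : Type} [Fintype d] [DecidableEq d] (ρ : Matrix d d ℂ) : Prop :=
  ρ.PosSemidef ∧ ρ.trace = 1

/-- A super-operator: a linear, positive, trace-preserving map on matrices. -/
def IsSuperOp {d : Type} [Fintype d] [DecidableEq d]
    (F : Matrix d d ℂ → Matrix d d ℂ) : Prop :=
  IsLinearMap ℂ F ∧ (∀ ρ : Matrix d d ℂ, ρ.PosSemidef → (F ρ).PosSemidef) ∧
    (∀ ρ : Matrix d d ℂ, (F ρ).trace = ρ.trace)

/-- A finite family of matrices (the data of a measurement). -/
structure PMeas (d : Type) where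
  m : ℕ
  E : Fin m → Matrix d d ℂ

/-- The family is a POVM: positive semidefinite elements summing to the identity. -/
def PMeas.IsPOVM {d : Type} [Fintype d] [DecidableEq d] (P : PMeas d) : Prop :=
  (∀ i, (P.E i).PosSemidef) ∧ ∑ i, P.E i = 1

/-- The distance between outcome distributions of a measurement on two states. -/
def dE {d : Type} [Fintype d] (P : PMeas d) (ρ σ : Matrix d d ℂ) : ℝ :=
  (1 / 2) * ∑ i, ‖(P.E i * ρ).trace - (P.E i * σ).trace‖

/-- The measurement pseudo-distance induced by a set of measurements. -/
def dM {d : Type} [Fintype d] (M : Set (PMeas d)) (ρ σ : Matrix d d ℂ) : ℝ :=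
  sSup { x | ∃ P ∈ M, x = dE P ρ σ }

/-- A quantum system: initial state, agents, commands, super-operators, measurements. -/
structure QSystem (Agent Cmd d : Type) where
  ρ0 : Matrix d d ℂ
  A : Set Agent
  C : Set Cmd
  Ecmd : Agent → Cmd → Matrix d d ℂ → Matrix d d ℂ
  M : Agent → Set (PMeas d)

/-- Well-formedness: the initial state is a density operator, commands act as
super-operators, and agents measure with POVMs. -/
def QSystem.WellFormed {Agent Cmd d : Type} [Fintype d] [DecidableEq d]
    (S : QSystem Agent Cmd d) : Prop :=
  IsDensity S.ρ0 ∧ (∀ a ∈ S.A, ∀ c ∈ S.C, IsSuperOp (S.Ecmd a c)) ∧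
    (∀ a ∈ S.A, ∀ P ∈ S.M a, P.IsPOVM)

/-- Execution of a finite action sequence (composition of super-operators, in order). -/
def QSystem.run {Agent Cmd d : Type} (S : QSystem Agent Cmd d)
    (α : List (Agent × Cmd)) (ρ : Matrix d d ℂ) : Matrix d d ℂ :=
  α.foldl (fun τ p => S.Ecmd p.1 p.2 τ) ρ

/-- A sequence over A × C. -/
def QSystem.Valid {Agent Cmd d : Type} (S : QSystem Agent Cmd d)
    (α : List (Agent × Cmd)) : Prop :=
  ∀ p ∈ α, p.1 ∈ S.A ∧ p.2 ∈ S.C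

/-- `purge G D α` deletes from `α` every pair `(a, c)` with `a ∈ G` and `c ∈ D`. -/
def purge {Agent Cmd : Type} (G : Set Agent) (D : Set Cmd) :
    List (Agent × Cmd) → List (Agent × Cmd)
  | [] => []
  | p :: rest => if p.1 ∈ G ∧ p.2 ∈ D then purge G D rest else p :: purge G D rest

/-- A reachable density operator. -/
def QSystem.Reachable {Agent Cmd d : Type} (S : QSystem Agent Cmd d)
    (ρ : Matrix d d ℂ) : Prop :=
  ∃ α, S.Valid α ∧ S.run α S.ρ0 = ρ

/-- `∇ a`: the set of agents from which information may not flow to `a`. -/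
def nabla {Agent : Type} (pol : Agent → Agent → Prop) (a : Agent) : Set Agent :=
  { b | ¬ pol b a }

/-- The security degree `K(𝕊,↝)`. -/
def Kdeg {Agent Cmd d : Type} [Fintype d] (S : QSystem Agent Cmd d)
    (pol : Agent → Agent → Prop) : ℝ :=
  sSup { x | ∃ a ∈ S.A, ∃ α, S.Valid α ∧
    x = dM (S.M a) (S.run α S.ρ0) (S.run (purge (nabla pol a) Set.univ α) S.ρ0) }

/-- The `t`-bounded security degree `K_t(𝕊,↝)`. -/
def Kt {Agent Cmd d : Type} [Fintype d] (S : QSystem Agent Cmd d)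
    (pol : Agent → Agent → Prop) (t : ℕ) : ℝ :=
  sSup { x | ∃ a ∈ S.A, ∃ α, S.Valid α ∧ α.length ≤ t ∧
    x = dM (S.M a) (S.run α S.ρ0) (S.run (purge (nabla pol a) Set.univ α) S.ρ0) }

/-- The interference degree `Int(G₁, D | G₂)`. -/
def IntDeg {Agent Cmd d : Type} [Fintype d] (S : QSystem Agent Cmd d)
    (G1 : Set Agent) (D : Set Cmd) (G2 : Set Agent) : ℝ :=
  sSup { x | ∃ a ∈ G2, ∃ α, S.Valid α ∧
    x = dM (S.M a) (S.run α S.ρ0) (S.run (purge G1 D α) S.ρ0) }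

/-- Trace distance `d(ρ,σ) = (1/2)·tr √((ρ−σ)†(ρ−σ))`. -/
def traceDist {d : Type} [Fintype d] [DecidableEq d] (ρ σ : Matrix d d ℂ) : ℝ :=
  (1 / 2) * ((((Matrix.posSemidef_conjTranspose_mul_self (ρ - σ)).1.eigenvectorUnitary : Matrix d d ℂ) *
    Matrix.diagonal ((fun x : ℝ => (x : ℂ)) ∘ Real.sqrt ∘ (Matrix.posSemidef_conjTranspose_mul_self (ρ - σ)).1.eigenvalues) *
    (star (Matrix.posSemidef_conjTranspose_mul_self (ρ - σ)).1.eigenvectorUnitary : Matrix d d ℂ)).trace).re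

end
noncomputable section

variable {N : Type} [Fintype N] [DecidableEq N] {ι : N → Type}
  [∀ n, Fintype (ι n)] [∀ n, DecidableEq (ι n)]

/-- Glue an assignment on `K` and an assignment on `Kᶜ` into a global assignment. -/
def glue (K : Finset N) (u : (n : K) → ι n.1) (w : (n : (Kᶜ : Finset N)) → ι n.1) :
    (n : N) → ι n :=
  fun n => if h : n ∈ K then u ⟨n, h⟩ else w ⟨n, Finset.mem_compl.mpr h⟩

/-- Partial trace `tr_{N∖K}`: trace out the locations outside `K`. -/
def ptrOut (K : Finset N) (ρ : Matrix ((n : N) → ι n) ((n : N) → ι n) ℂ) :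
    Matrix ((n : K) → ι n.1) ((n : K) → ι n.1) ℂ :=
  Matrix.of fun u v =>
    ∑ w : (n : (Kᶜ : Finset N)) → ι n.1, ρ (glue K u w) (glue K v w)

/-- A below-closed family of sets of locations. -/
def BelowClosed {N : Type} (B : Set (Finset N)) : Prop :=
  ∀ K ∈ B, ∀ L ⊆ K, L ∈ B

/-- The pseudo-distance `δ_a(ρ,σ) = sup_{K ∈ read(a)} d(tr_{N∖K}(ρ), tr_{N∖K}(σ))`. -/
def deltaRead {Agent : Type} (read : Agent → Set (Finset N)) (a : Agent)
    (ρ σ : Matrix ((n : N) → ι n) ((n : N) → ι n) ℂ) : ℝ :=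
  sSup { x | ∃ K ∈ read a, x = traceDist (ptrOut K ρ) (ptrOut K σ) }

/-- `Dis(ρ,σ | ε, K)`: `ρ` and `σ` are `ε`-discriminable on `K`. -/
def Dis (K : Finset N) (ε : ℝ)
    (ρ σ : Matrix ((n : N) → ι n) ((n : N) → ι n) ℂ) : Prop :=
  traceDist (ptrOut K ρ) (ptrOut K σ) > ε

/-- The access control matrix `(read, alter)` satisfies the policy `↝`. -/
def ACMSatisfies {Agent N : Type} (A : Set Agent) (pol : Agent → Agent → Prop)
    (read alter : Agent → Set (Finset N)) : Prop :=
  (∀ a ∈ A, ∀ b ∈ A, pol a b → read a ⊆ read b) ∧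
  (∀ a ∈ A, ∀ b ∈ A, (∃ K ∈ read a, ∃ L ∈ alter b, (K ∩ L).Nonempty) → pol b a)

end

section AccessControl

variable {N : Type} [Fintype N] [DecidableEq N] {ι : N → Type}
  [∀ n, Fintype (ι n)] [∀ n, DecidableEq (ι n)]

theorem deltaRead_le {Agent : Type} {read : Agent → Set (Finset N)} {a : Agent}
    {ρ σ : Matrix ((n : N) → ι n) ((n : N) → ι n) ℂ} {ε : ℝ} (hε : 0 ≤ ε)
    (h : ∀ K ∈ read a, traceDist (ptrOut K ρ) (ptrOut K σ) ≤ ε) :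
    deltaRead read a ρ σ ≤ ε :=
  Real.sSup_le (by rintro x ⟨K, hK, rfl⟩; exact h K hK) hε

end AccessControl

theorem ACMSatisfies.disjoint_of_not_pol {Agent N : Type} {A : Set Agent}
    {pol : Agent → Agent → Prop} {read alter : Agent → Set (Finset N)}
    (hacm : ACMSatisfies A pol read alter) {a b : Agent} (ha : a ∈ A) (hb : b ∈ A)
    (hba : ¬ pol b a) {K L : Finset N} (hK : K ∈ read a) (hL : L ∈ alter b) :
    Disjoint K L := by
  classical
  exact Finset.disjoint_iff_inter_eq_empty.mpr <| Finset.not_nonempty_iff_eq_empty.mp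
    fun hKL => hba (hacm.2 a ha b hb ⟨K, hK, L, hL, hKL⟩)

theorem access_control_local_respect_general {Agent Cmd N : Type} [Fintype N] [DecidableEq N]
    {ι : N → Type} [∀ n, Fintype (ι n)] [∀ n, DecidableEq (ι n)]
    (S : QSystem Agent Cmd ((n : N) → ι n))
    (pol : Agent → Agent → Prop)
    (read alter : Agent → Set (Finset N))
    (hacm : ACMSatisfies S.A pol read alter)
    (ε : ℝ) (hε : 0 ≤ ε)
    (RM3 : ∀ b ∈ S.A, ∀ c ∈ S.C, ∀ ρ, S.Reachable ρ → ∀ K : Finset N,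
      Dis K ε ρ (S.Ecmd b c ρ) → ∃ L ∈ alter b, (K ∩ L).Nonempty) :
    ∀ a ∈ S.A, ∀ b ∈ S.A, ¬ pol b a → ∀ c ∈ S.C, ∀ ρ, S.Reachable ρ →
      deltaRead read a ρ (S.Ecmd b c ρ) ≤ ε := by
  intro a ha b hb hba c hc ρ hρ
  refine deltaRead_le hε fun K hK => not_lt.mp fun hDis => ?_
  obtain ⟨L, hL, hKL⟩ := RM3 b hb c hc ρ hρ K hDis
  exact Finset.not_disjoint_iff_nonempty_inter.mpr hKL (hacm.disjoint_of_not_pol ha hb hba hK hL)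

/-- **Claim 2 in the proof of the access control theorem.** Under (RM3), if
`¬(b ↝ a)` then `δ_a(ρ, 𝓔_{b,c}(ρ)) ≤ ε` for all commands `c ∈ C` and reachable `ρ`. -/
theorem access_control_local_respect {Agent Cmd N : Type} [Fintype N] [DecidableEq N]
    {ι : N → Type} [∀ n, Fintype (ι n)] [∀ n, DecidableEq (ι n)]
    [∀ n, Nonempty (ι n)]
    (S : QSystem Agent Cmd ((n : N) → ι n)) (hS : S.WellFormed)
    (pol : Agent → Agent → Prop) (hpol : ∀ a ∈ S.A, pol a a)
    (read alter : Agent → Set (Finset N))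
    (hread : ∀ a ∈ S.A, BelowClosed (read a))
    (halter : ∀ a ∈ S.A, BelowClosed (alter a))
    (hacm : ACMSatisfies S.A pol read alter)
    (ε : ℝ) (hε : 0 ≤ ε)
    (RM3 : ∀ b ∈ S.A, ∀ c ∈ S.C, ∀ ρ, S.Reachable ρ → ∀ K : Finset N,
      Dis K ε ρ (S.Ecmd b c ρ) → ∃ L ∈ alter b, (K ∩ L).Nonempty) :
    ∀ a ∈ S.A, ∀ b ∈ S.A, ¬ pol b a → ∀ c ∈ S.C, ∀ ρ, S.Reachable ρ →
      deltaRead read a ρ (S.Ecmd b c ρ) ≤ ε :=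
  access_control_local_respect_general S pol read alter hacm ε hε RM3
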